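/- A digraph G = (V_W ∪ V_B ∪ V_R, E) with no sinks is ergodic (i.e., every BWR-game on G has position-independent value) if and only if G admits no contra-ergodic partition. -/

import Mathlib

/-!
If `μ` is a non-constant value, realized by a saddle point `s`, then `μ` is harmonic for the
Markov chain of `s`, and no player can improve `μ` locally: were White able to move from `v` to
`u` with `μ u > μ v`, then `μ` would be subharmonic for the deviating chain, so by the mean
ergodic theorem for stochastic matrices the deviation would earn at least `μ` everywhere, hence
exactly `μ`, and `μ` would be harmonic at `v` after all. So the positions of maximal and of
minimal value form a contra-ergodic partition.

Conversely, conditions (ii) and (iii) of a contra-ergodic partition say that the local value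
operator (max at White, min at Black, mean at Random positions) raises the function that is `1`
on `V⁺` and `-1` elsewhere, and lowers the one that is `-1` on `V⁻` and `1` elsewhere. By
Tarski's theorem it has a fixed point `g` between the two; rewarding every move out of `v` by
`g v`, the locally optimal strategies form a saddle point with value `g`, which is `1` on `V⁺`
and `-1` on `V⁻`.
-/

open Matrix Filter

/-- A BWR-game: finite digraph with no sinks, positions partitioned into
White (`player v = 0`), Black (`player v = 1`) and Random (`player v = 2`),
positive transition probabilities on arcs out of random positions summing to 1,
and local rewards on arcs. -/
structure BWR (V : Type) [Fintype V] [DecidableEq V] where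
  succ : V → Finset V
  succ_nonempty : ∀ v, (succ v).Nonempty
  player : V → Fin 3
  p : V → V → ℝ
  p_mem : ∀ v u, player v = 2 → (u ∈ succ v ↔ 0 < p v u)
  p_zero : ∀ v u, player v = 2 → u ∉ succ v → p v u = 0
  p_sum : ∀ v, player v = 2 → ∑ u ∈ succ v, p v u = 1
  r : V → V → ℝ

namespace BWR

variable {V : Type} [Fintype V] [DecidableEq V] (G : BWR V)

/-- A (pure stationary) situation is valid if it moves along arcs. -/
def Valid (s : V → V) : Prop := ∀ v, s v ∈ G.succ v

/-- Combine a White strategy and a Black strategy into one situation. -/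
def combine (sW sB : V → V) : V → V := fun v => if G.player v = 0 then sW v else sB v

/-- Transition matrix of the Markov chain obtained by fixing situation `s`. -/
noncomputable def P (s : V → V) : Matrix V V ℝ :=
  Matrix.of fun v u => if G.player v = 2 then G.p v u else if s v = u then 1 else 0

/-- Expected one-step reward under situation `s`. -/
noncomputable def rbar (s : V → V) : V → ℝ :=
  fun v => if G.player v = 2 then ∑ u ∈ G.succ v, G.p v u * G.r v u else G.r v (s v)

/-- Limiting mean payoff from initial position `v` under situation `s`. -/
noncomputable def payoff (s : V → V) (v : V) : ℝ :=
  Filter.liminf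
    (fun T : ℕ => (∑ t ∈ Finset.range (T + 1), (G.P s ^ t).mulVec (G.rbar s)) v / (T + 1))
    Filter.atTop

/-- `μ` is the value function of the game: some saddle point in pure stationary
strategies realizes it uniformly. -/
def IsValue (μ : V → ℝ) : Prop :=
  ∃ sW sB : V → V, G.Valid (G.combine sW sB) ∧
    (∀ v, μ v = G.payoff (G.combine sW sB) v) ∧
    (∀ sW' : V → V, G.Valid (G.combine sW' sB) → ∀ v, G.payoff (G.combine sW' sB) v ≤ μ v) ∧
    (∀ sB' : V → V, G.Valid (G.combine sW sB') → ∀ v, μ v ≤ G.payoff (G.combine sW sB') v)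

/-- The local value `M̄[r](v)`. -/
noncomputable def mbar : V → ℝ := fun v =>
  if G.player v = 0 then (G.succ v).sup' (G.succ_nonempty v) (fun u => G.r v u)
  else if G.player v = 1 then (G.succ v).inf' (G.succ_nonempty v) (fun u => G.r v u)
  else ∑ u ∈ G.succ v, G.p v u * G.r v u

/-- A locally optimal situation achieves the local value at every controlled position. -/
def LocallyOptimal (s : V → V) : Prop :=
  G.Valid s ∧ ∀ v, G.player v ≠ 2 → G.r v (s v) = G.mbar v

end BWR

/-- A contra-ergodic partition of a digraph with position partition `player`. -/
def ContraErgodicPartition {V : Type} [Fintype V] [DecidableEq V]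
    (succ : V → Finset V) (player : V → Fin 3) (Vp Vm : Set V) : Prop :=
  Vp.Nonempty ∧ Vm.Nonempty ∧ Disjoint Vp Vm ∧
  -- (ii) White and Random cannot leave V⁻ ; Black and Random cannot leave V⁺
  (∀ v ∈ Vm, (player v = 0 ∨ player v = 2) → ∀ u ∈ succ v, u ∈ Vm) ∧
  (∀ v ∈ Vp, (player v = 1 ∨ player v = 2) → ∀ u ∈ succ v, u ∈ Vp) ∧
  -- (iii) White cannot be forced to leave V⁺, Black cannot be forced to leave V⁻
  (∀ v ∈ Vp, player v = 0 → ∃ u ∈ succ v, u ∈ Vp) ∧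
  (∀ v ∈ Vm, player v = 1 → ∃ u ∈ succ v, u ∈ Vm)

open Topology

lemma Finset.eq_of_sum_mul_eq_of_le {ι : Type*} {s : Finset ι} {p x : ι → ℝ} {c : ℝ}
    (hp : ∀ i ∈ s, 0 < p i) (hsum : ∑ i ∈ s, p i = 1) (hx : ∑ i ∈ s, p i * x i = c)
    (hc : ∀ i ∈ s, c ≤ x i) : ∀ i ∈ s, x i = c := by
  have hzero : ∑ i ∈ s, p i * (x i - c) = 0 := by
    simp [mul_sub, Finset.sum_sub_distrib, ← Finset.sum_mul, hsum, hx]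
  intro i hi
  have hterm := (Finset.sum_eq_zero_iff_of_nonneg fun j hj =>
    mul_nonneg (hp j hj).le (sub_nonneg.2 (hc j hj))).1 hzero i hi
  linarith [(mul_eq_zero.1 hterm).resolve_left (hp i hi).ne']

theorem Monotone.exists_mem_Icc_isFixedPt {α : Type*} [ConditionallyCompleteLattice α]
    {F : α → α} (hF : Monotone F) {a b : α} (hab : a ≤ b) (ha : a ≤ F a) (hb : F b ≤ b) :
    ∃ x ∈ Set.Icc a b, Function.IsFixedPt F x := by
  have : Fact (a ≤ b) := ⟨hab⟩
  let F' : Set.Icc a b →o Set.Icc a b :=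
    ⟨fun x => ⟨F x, ha.trans (hF x.2.1), (hF x.2.2).trans hb⟩, fun _ _ h => hF h⟩
  exact ⟨F'.gfp, F'.gfp.2, congrArg Subtype.val F'.map_gfp⟩

namespace Matrix

variable {V : Type*} [Fintype V] [DecidableEq V] {P : Matrix V V ℝ}

noncomputable def cesaro (P : Matrix V V ℝ) (T : ℕ) : (V → ℝ) →ₗ[ℝ] V → ℝ :=
  ((T : ℝ) + 1)⁻¹ • ∑ t ∈ Finset.range (T + 1), (P ^ t).mulVecLin

lemma cesaro_apply (T : ℕ) (x : V → ℝ) :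
    P.cesaro T x = ((T : ℝ) + 1)⁻¹ • ∑ t ∈ Finset.range (T + 1), P ^ t *ᵥ x := by
  simp [cesaro]

lemma mulVec_mono_of_mem_rowStochastic (hP : P ∈ rowStochastic ℝ V) {x y : V → ℝ}
    (hxy : x ≤ y) : P *ᵥ x ≤ P *ᵥ y := fun v => by
  simpa [mulVec_sub] using nonneg_mulVec_of_mem_rowStochastic hP (x := y - x)
    (fun u => sub_nonneg.2 (hxy u)) v

lemma norm_mulVec_le_of_mem_rowStochastic (hP : P ∈ rowStochastic ℝ V) (x : V → ℝ) :
    ‖P *ᵥ x‖ ≤ ‖x‖ := by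
  have hconst : ∀ c : ℝ, P *ᵥ (fun _ => c) = fun _ => c := fun c => by
    rw [show (fun _ : V => c) = c • (1 : V → ℝ) by ext; simp, mulVec_smul,
      one_vecMul_of_mem_rowStochastic hP]
  refine (pi_norm_le_iff_of_nonneg (norm_nonneg x)).2 fun v => abs_le.2 ⟨?_, ?_⟩
  · simpa [hconst] using mulVec_mono_of_mem_rowStochastic hP
      (fun u => neg_le_of_abs_le (norm_le_pi_norm x u)) v
  · simpa [hconst] using mulVec_mono_of_mem_rowStochastic hP
      (fun u => le_of_abs_le (norm_le_pi_norm x u)) v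

lemma cesaro_eq_self_of_mulVec_eq {g : V → ℝ} (hg : P *ᵥ g = g) (T : ℕ) :
    P.cesaro T g = g := by
  have hpow : ∀ t, P ^ t *ᵥ g = g := fun t => by
    induction t with
    | zero => simp
    | succ t ih => rw [pow_succ, ← mulVec_mulVec, hg, ih]
  rw [cesaro_apply, Finset.sum_congr rfl fun t _ => hpow t, Finset.sum_const,
    Finset.card_range, ← Nat.cast_smul_eq_nsmul ℝ, smul_smul]
  push_cast
  rw [inv_mul_cancel₀ (by positivity), one_smul]

lemma le_cesaro_of_le_mulVec (hP : P ∈ rowStochastic ℝ V) {x : V → ℝ} (hx : x ≤ P *ᵥ x)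
    (T : ℕ) : x ≤ P.cesaro T x := by
  have hpow : ∀ t, x ≤ P ^ t *ᵥ x := fun t => by
    induction t with
    | zero => simp
    | succ t ih =>
      rw [pow_succ', ← mulVec_mulVec]
      exact hx.trans (mulVec_mono_of_mem_rowStochastic hP ih)
  intro v
  have hsum := Finset.sum_le_sum fun t (_ : t ∈ Finset.range (T + 1)) => hpow t v
  rw [Finset.sum_const, Finset.card_range, nsmul_eq_mul] at hsum
  push_cast at hsum
  rw [cesaro_apply, Pi.smul_apply, Finset.sum_apply, smul_eq_mul,
    le_inv_mul_iff₀ (by positivity)]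
  linarith

lemma cesaro_le_of_mulVec_le (hP : P ∈ rowStochastic ℝ V) {x : V → ℝ} (hx : P *ᵥ x ≤ x)
    (T : ℕ) : P.cesaro T x ≤ x := by
  simpa using le_cesaro_of_le_mulVec hP (x := -x) (by simpa [mulVec_neg] using hx) T

lemma cesaro_sub_mulVec (T : ℕ) (x : V → ℝ) :
    P.cesaro T (x - P *ᵥ x) = ((T : ℝ) + 1)⁻¹ • (x - P ^ (T + 1) *ᵥ x) := by
  rw [cesaro_apply]
  congr 1
  simpa [mulVec_sub, mulVec_mulVec, ← pow_succ] using
    Finset.sum_range_sub' (fun t => P ^ t *ᵥ x) (T + 1)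

lemma tendsto_cesaro_sub_mulVec (hP : P ∈ rowStochastic ℝ V) (x : V → ℝ) :
    Tendsto (fun T => P.cesaro T (x - P *ᵥ x)) atTop (𝓝 0) := by
  have hbound : ∀ T : ℕ, ‖P.cesaro T (x - P *ᵥ x)‖ ≤ 2 * ‖x‖ * (1 / ((T : ℝ) + 1)) := by
    intro T
    have hpow := norm_mulVec_le_of_mem_rowStochastic (pow_mem hP (T + 1)) x
    rw [cesaro_sub_mulVec, norm_smul, norm_inv, Real.norm_of_nonneg (by positivity)]
    calc ((T : ℝ) + 1)⁻¹ * ‖x - P ^ (T + 1) *ᵥ x‖ ≤ ((T : ℝ) + 1)⁻¹ * (‖x‖ + ‖x‖) := by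
          gcongr; exact (norm_sub_le _ _).trans (by gcongr)
      _ = 2 * ‖x‖ * (1 / ((T : ℝ) + 1)) := by ring
  refine squeeze_zero_norm hbound ?_
  simpa using tendsto_one_div_add_atTop_nhds_zero_nat.const_mul (2 * ‖x‖)

lemma disjoint_ker_range_one_sub_mulVecLin (hP : P ∈ rowStochastic ℝ V) :
    Disjoint (LinearMap.ker (1 - P.mulVecLin)) (LinearMap.range (1 - P.mulVecLin)) := by
  rw [Submodule.disjoint_def]
  rintro x hker ⟨y, rfl⟩
  have hfix : P *ᵥ (y - P *ᵥ y) = y - P *ᵥ y := by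
    simpa [sub_eq_zero, eq_comm] using hker
  have hconst : Tendsto (fun T => P.cesaro T (y - P *ᵥ y)) atTop (𝓝 (y - P *ᵥ y)) := by
    simp only [cesaro_eq_self_of_mulVec_eq hfix, tendsto_const_nhds]
  simpa using tendsto_nhds_unique hconst (tendsto_cesaro_sub_mulVec hP y)

lemma exists_eq_add_sub_mulVec (hP : P ∈ rowStochastic ℝ V) (x : V → ℝ) :
    ∃ h b, P *ᵥ h = h ∧ x = h + (b - P *ᵥ b) := by
  have hcompl : IsCompl (LinearMap.ker (1 - P.mulVecLin)) (LinearMap.range (1 - P.mulVecLin)) :=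
    (Submodule.isCompl_iff_disjoint _ _
      (by rw [add_comm, LinearMap.finrank_range_add_finrank_ker])).2
      (disjoint_ker_range_one_sub_mulVecLin hP)
  obtain ⟨h, hh, _, ⟨b, rfl⟩, rfl⟩ :=
    Submodule.mem_sup.1 (hcompl.sup_eq_top ▸ Submodule.mem_top (x := x))
  exact ⟨h, b, by simpa [sub_eq_zero, eq_comm] using hh, by simp⟩

lemma tendsto_cesaro_of_eq_add_sub_mulVec (hP : P ∈ rowStochastic ℝ V) {x h b : V → ℝ}
    (hh : P *ᵥ h = h) (hx : x = h + (b - P *ᵥ b)) :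
    Tendsto (fun T => P.cesaro T x) atTop (𝓝 h) := by
  subst hx
  simpa [cesaro_eq_self_of_mulVec_eq hh] using
    (tendsto_const_nhds (x := h)).add (tendsto_cesaro_sub_mulVec hP b)

/-- Off `v`, both `ρ - μ - (b - P b)` and `μ - P μ` vanish, so the former is a multiple of the
latter. -/
lemma tendsto_cesaro_sub_cesaro_of_mulVec_ne (hP : P ∈ rowStochastic ℝ V) {μ ρ b : V → ℝ}
    {v : V} (hμ : ∀ w ≠ v, (P *ᵥ μ) w = μ w) (hμv : (P *ᵥ μ) v ≠ μ v)
    (hρ : ∀ w ≠ v, ρ w = μ w + (b w - (P *ᵥ b) w)) :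
    Tendsto (fun T => P.cesaro T ρ - P.cesaro T μ) atTop (𝓝 0) := by
  set k := (ρ v - μ v - (b v - (P *ᵥ b) v)) / (μ v - (P *ᵥ μ) v)
  have hρ' : ρ = μ + (b - P *ᵥ b) + k • (μ - P *ᵥ μ) := by
    ext w
    by_cases hw : w = v
    · subst hw
      simp only [Pi.add_apply, Pi.sub_apply, Pi.smul_apply, smul_eq_mul, k]
      field_simp [sub_ne_zero.2 hμv.symm]
      ring
    · simp [hρ w hw, hμ w hw]
  simpa [hρ', add_sub_right_comm] using
    (tendsto_cesaro_sub_mulVec hP b).add ((tendsto_cesaro_sub_mulVec hP μ).const_smul k)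

end Matrix

namespace BWR

variable {V : Type} [Fintype V] [DecidableEq V] (G : BWR V) {s s' : V → V}

lemma p_nonneg {v : V} (hv : G.player v = 2) (u : V) : 0 ≤ G.p v u := by
  by_cases hu : u ∈ G.succ v
  · exact ((G.p_mem v u hv).1 hu).le
  · exact (G.p_zero v u hv hu).ge

lemma mulVec_P_of_player_eq_two {v : V} (hv : G.player v = 2) (x : V → ℝ) :
    (G.P s *ᵥ x) v = ∑ u ∈ G.succ v, G.p v u * x u := by
  rw [Finset.sum_subset (Finset.subset_univ _) fun u _ hu => by
    rw [G.p_zero v u hv hu, zero_mul]]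
  simp [P, mulVec, dotProduct, hv]

lemma mulVec_P_of_player_ne_two {v : V} (hv : G.player v ≠ 2) (x : V → ℝ) :
    (G.P s *ᵥ x) v = x (s v) := by
  simp [P, mulVec, dotProduct, hv]

lemma mulVec_P_eq_of_forall_ne {v : V} (hss' : ∀ w ≠ v, s' w = s w) {w : V} (hw : w ≠ v)
    (x : V → ℝ) : (G.P s' *ᵥ x) w = (G.P s *ᵥ x) w := by
  by_cases hp : G.player w = 2
  · rw [G.mulVec_P_of_player_eq_two hp, G.mulVec_P_of_player_eq_two hp]
  · rw [G.mulVec_P_of_player_ne_two hp, G.mulVec_P_of_player_ne_two hp, hss' w hw]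

lemma rbar_eq_of_forall_ne {v : V} (hss' : ∀ w ≠ v, s' w = s w) {w : V} (hw : w ≠ v) :
    G.rbar s' w = G.rbar s w := by
  simp [rbar, hss' w hw]

lemma P_mem_rowStochastic (s : V → V) : G.P s ∈ rowStochastic ℝ V := by
  refine mem_rowStochastic_iff_sum.2 ⟨fun v u => ?_, fun v => ?_⟩ <;>
    by_cases hv : G.player v = 2
  · simpa [P, hv] using G.p_nonneg hv u
  · simp only [P, of_apply, hv, if_false]
    positivity
  · rw [← G.p_sum v hv,
      Finset.sum_subset (Finset.subset_univ _) fun u _ hu => G.p_zero v u hv hu]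
    simp [P, hv]
  · simp [P, hv]

lemma payoff_eq_of_tendsto {g : V → ℝ}
    (h : Tendsto (fun T => (G.P s).cesaro T (G.rbar s)) atTop (𝓝 g)) : G.payoff s = g := by
  funext v
  refine ((tendsto_pi_nhds.1 h v).congr fun T => ?_).liminf_eq
  simp [cesaro_apply, div_eq_inv_mul]

lemma exists_rbar_eq_payoff_add (s : V → V) :
    ∃ b, G.P s *ᵥ G.payoff s = G.payoff s ∧ G.rbar s = G.payoff s + (b - G.P s *ᵥ b) := by
  have hP := G.P_mem_rowStochastic s
  obtain ⟨h, b, hh, hr⟩ := exists_eq_add_sub_mulVec hP (G.rbar s)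
  rw [G.payoff_eq_of_tendsto (tendsto_cesaro_of_eq_add_sub_mulVec hP hh hr)]
  exact ⟨b, hh, hr⟩

lemma mulVec_payoff (s : V → V) : G.P s *ᵥ G.payoff s = G.payoff s :=
  (G.exists_rbar_eq_payoff_add s).choose_spec.1

lemma tendsto_cesaro_payoff (s : V → V) :
    Tendsto (fun T => (G.P s).cesaro T (G.rbar s)) atTop (𝓝 (G.payoff s)) :=
  have ⟨_, hh, hr⟩ := G.exists_rbar_eq_payoff_add s
  tendsto_cesaro_of_eq_add_sub_mulVec (G.P_mem_rowStochastic s) hh hr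

lemma tendsto_cesaro_payoff_of_forall_ne {v : V} (hv : G.player v ≠ 2)
    (hss' : ∀ w ≠ v, s' w = s w) (hne : G.payoff s (s' v) ≠ G.payoff s v) :
    Tendsto (fun T => (G.P s').cesaro T (G.payoff s)) atTop (𝓝 (G.payoff s')) := by
  obtain ⟨b, hμ, hr⟩ := G.exists_rbar_eq_payoff_add s
  have hdiff := tendsto_cesaro_sub_cesaro_of_mulVec_ne (G.P_mem_rowStochastic s')
    (ρ := G.rbar s') (b := b)
    (fun w hw => by rw [G.mulVec_P_eq_of_forall_ne hss' hw, hμ])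
    (by rwa [G.mulVec_P_of_player_ne_two hv])
    (fun w hw => by
      rw [G.rbar_eq_of_forall_ne hss' hw, G.mulVec_P_eq_of_forall_ne hss' hw, hr]
      rfl)
  simpa using (G.tendsto_cesaro_payoff s').sub hdiff

lemma payoff_apply_le_of_forall_ne {v : V} (hv : G.player v ≠ 2) (hss' : ∀ w ≠ v, s' w = s w)
    (hle : G.payoff s' ≤ G.payoff s) : G.payoff s (s' v) ≤ G.payoff s v := by
  by_contra! hlt
  have hsub : G.payoff s ≤ G.P s' *ᵥ G.payoff s := fun w => by
    by_cases hw : w = v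
    · subst hw
      rw [G.mulVec_P_of_player_ne_two hv]
      exact hlt.le
    · rw [G.mulVec_P_eq_of_forall_ne hss' hw, G.mulVec_payoff]
  have hge : G.payoff s ≤ G.payoff s' :=
    ge_of_tendsto' (G.tendsto_cesaro_payoff_of_forall_ne hv hss' hlt.ne')
      (le_cesaro_of_le_mulVec (G.P_mem_rowStochastic s') hsub)
  have hfix := congrFun (G.mulVec_payoff s') v
  rw [G.mulVec_P_of_player_ne_two hv, le_antisymm hle hge] at hfix
  exact hlt.ne' hfix

lemma payoff_apply_ge_of_forall_ne {v : V} (hv : G.player v ≠ 2) (hss' : ∀ w ≠ v, s' w = s w)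
    (hle : G.payoff s ≤ G.payoff s') : G.payoff s v ≤ G.payoff s (s' v) := by
  by_contra! hlt
  have hsup : G.P s' *ᵥ G.payoff s ≤ G.payoff s := fun w => by
    by_cases hw : w = v
    · subst hw
      rw [G.mulVec_P_of_player_ne_two hv]
      exact hlt.le
    · rw [G.mulVec_P_eq_of_forall_ne hss' hw, G.mulVec_payoff]
  have hle' : G.payoff s' ≤ G.payoff s :=
    le_of_tendsto' (G.tendsto_cesaro_payoff_of_forall_ne hv hss' hlt.ne)
      (cesaro_le_of_mulVec_le (G.P_mem_rowStochastic s') hsup)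
  have hfix := congrFun (G.mulVec_payoff s') v
  rw [G.mulVec_P_of_player_ne_two hv, le_antisymm hle' hle] at hfix
  exact hlt.ne hfix

lemma combine_update_of_player_eq_zero {sW sB : V → V} {v : V} (hv : G.player v = 0)
    (u : V) : G.combine (Function.update sW v u) sB = Function.update (G.combine sW sB) v u := by
  funext w
  by_cases hw : w = v
  · subst hw; simp [combine, hv]
  · simp [combine, hw]

lemma combine_update_of_player_ne_zero {sW sB : V → V} {v : V} (hv : G.player v ≠ 0)
    (u : V) : G.combine sW (Function.update sB v u) = Function.update (G.combine sW sB) v u := by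
  funext w
  by_cases hw : w = v
  · subst hw; simp [combine, hv]
  · simp [combine, hw]

variable {G} {μ : V → ℝ}

lemma Valid.update (hs : G.Valid s) {v u : V} (hu : u ∈ G.succ v) :
    G.Valid (Function.update s v u) := fun w => by
  by_cases hw : w = v
  · subst hw; simpa
  · simpa [hw] using hs w

lemma IsValue.exists_mulVec_eq (hμ : G.IsValue μ) : ∃ s, G.Valid s ∧ G.P s *ᵥ μ = μ := by
  obtain ⟨sW, sB, hs, hμs, -⟩ := hμ
  rw [show μ = G.payoff (G.combine sW sB) from funext hμs]
  exact ⟨_, hs, G.mulVec_payoff _⟩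

lemma IsValue.le_of_mem_succ_of_player_eq_zero (hμ : G.IsValue μ) {v u : V}
    (hv : G.player v = 0) (hu : u ∈ G.succ v) : μ u ≤ μ v := by
  obtain ⟨sW, sB, hs, hμs, hW, -⟩ := hμ
  rw [show μ = G.payoff (G.combine sW sB) from funext hμs] at hW ⊢
  have hupd := G.combine_update_of_player_eq_zero (sW := sW) (sB := sB) hv u
  have hdev := hW (Function.update sW v u) (hupd ▸ hs.update hu)
  rw [hupd] at hdev
  simpa using G.payoff_apply_le_of_forall_ne (by simp [hv])
    (fun w hw => Function.update_of_ne hw _ _) hdev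

lemma IsValue.le_of_mem_succ_of_player_eq_one (hμ : G.IsValue μ) {v u : V}
    (hv : G.player v = 1) (hu : u ∈ G.succ v) : μ v ≤ μ u := by
  obtain ⟨sW, sB, hs, hμs, -, hB⟩ := hμ
  rw [show μ = G.payoff (G.combine sW sB) from funext hμs] at hB ⊢
  have hupd := G.combine_update_of_player_ne_zero (sW := sW) (sB := sB) (v := v) (by simp [hv]) u
  have hdev := hB (Function.update sB v u) (hupd ▸ hs.update hu)
  rw [hupd] at hdev
  simpa using G.payoff_apply_ge_of_forall_ne (by simp [hv])
    (fun w hw => Function.update_of_ne hw _ _) hdev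

theorem IsValue.contraErgodicPartition (hμ : G.IsValue μ) {v₀ u₀ : V} (hμ₀ : μ v₀ ≠ μ u₀) :
    ContraErgodicPartition G.succ G.player {w | ∀ u, μ u ≤ μ w} {w | ∀ u, μ w ≤ μ u} := by
  obtain ⟨s, hs, hharm⟩ := hμ.exists_mulVec_eq
  have hdet : ∀ v, G.player v ≠ 2 → μ (s v) = μ v := fun v hv => by
    simpa [G.mulVec_P_of_player_ne_two hv] using congrFun hharm v
  have hrand : ∀ v, G.player v = 2 → ∀ x : V → ℝ, ∑ u ∈ G.succ v, G.p v u * x u = x v →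
      (∀ u, x v ≤ x u) → ∀ u ∈ G.succ v, x u = x v := fun v hv x hx hmin =>
    Finset.eq_of_sum_mul_eq_of_le (fun u hu => (G.p_mem v u hv).1 hu) (G.p_sum v hv) hx
      fun u _ => hmin u
  have hrandμ : ∀ v, G.player v = 2 → ∑ u ∈ G.succ v, G.p v u * μ u = μ v := fun v hv => by
    simpa [G.mulVec_P_of_player_eq_two hv] using congrFun hharm v
  have : Nonempty V := ⟨v₀⟩
  refine ⟨Finite.exists_max μ, Finite.exists_min μ, Set.disjoint_left.2 fun w hmax hmin => ?_,
    fun v hv hp u hu x => ?_, fun v hv hp u hu x => ?_, fun v hv hp => ?_, fun v hv hp => ?_⟩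
  · exact hμ₀ (le_antisymm ((hmax v₀).trans (hmin u₀)) ((hmax u₀).trans (hmin v₀)))
  · rcases hp with hp | hp
    · exact (hμ.le_of_mem_succ_of_player_eq_zero hp hu).trans (hv x)
    · exact (hrand v hp μ (hrandμ v hp) hv u hu).le.trans (hv x)
  · rcases hp with hp | hp
    · exact (hv x).trans (hμ.le_of_mem_succ_of_player_eq_one hp hu)
    · have := hrand v hp (-μ) (by simp [← hrandμ v hp]) (fun w => neg_le_neg (hv w)) u hu
      exact (hv x).trans (neg_inj.1 this).ge
  · exact ⟨s v, hs v, fun x => (hdet v (by simp [hp])).symm ▸ hv x⟩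
  · exact ⟨s v, hs v, fun x => (hdet v (by simp [hp])).symm ▸ hv x⟩

variable (G)

/-- `G.localValue g` is `G.mbar` computed for the rewards `r v u = g u`. -/
noncomputable def localValue (g : V → ℝ) : V → ℝ := fun v =>
  if G.player v = 0 then (G.succ v).sup' (G.succ_nonempty v) g
  else if G.player v = 1 then (G.succ v).inf' (G.succ_nonempty v) g
  else ∑ u ∈ G.succ v, G.p v u * g u

lemma localValue_of_player_eq_zero {g : V → ℝ} {v : V} (hv : G.player v = 0) :
    G.localValue g v = (G.succ v).sup' (G.succ_nonempty v) g := by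
  simp [localValue, hv]

lemma localValue_of_player_eq_one {g : V → ℝ} {v : V} (hv : G.player v = 1) :
    G.localValue g v = (G.succ v).inf' (G.succ_nonempty v) g := by
  simp [localValue, hv]

lemma localValue_of_player_eq_two {g : V → ℝ} {v : V} (hv : G.player v = 2) :
    G.localValue g v = ∑ u ∈ G.succ v, G.p v u * g u := by
  simp [localValue, hv]

lemma localValue_mono : Monotone G.localValue := fun g g' h v => by
  unfold localValue
  split_ifs with h0 h1
  · exact Finset.sup'_mono_fun fun u _ => h u
  · exact Finset.inf'_mono_fun fun u _ => h u
  · exact Finset.sum_le_sum fun u _ =>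
      mul_le_mul_of_nonneg_left (h u) (G.p_nonneg (by omega) u)

lemma localValue_const (c : ℝ) : G.localValue (fun _ => c) = fun _ => c := by
  funext v
  unfold localValue
  split_ifs with h0 h1
  · exact Finset.sup'_const _ c
  · exact Finset.inf'_const _ c
  · rw [← Finset.sum_mul, G.p_sum v (by omega), one_mul]

lemma localValue_congr {g g' : V → ℝ} {v : V} (h : ∀ u ∈ G.succ v, g u = g' u) :
    G.localValue g v = G.localValue g' v := by
  unfold localValue
  split_ifs
  · exact Finset.sup'_congr _ rfl h
  · exact Finset.inf'_congr _ rfl h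
  · exact Finset.sum_congr rfl fun u hu => by rw [h u hu]

lemma exists_localValue_eq_of_contraErgodicPartition {Vp Vm : Set V}
    (h : ContraErgodicPartition G.succ G.player Vp Vm) :
    ∃ g, G.localValue g = g ∧ (∀ v ∈ Vp, g v = 1) ∧ ∀ v ∈ Vm, g v = -1 := by
  classical
  obtain ⟨-, -, hdisj, hWm, hBp, hWp, hBm⟩ := h
  let a : V → ℝ := fun v => if v ∈ Vp then 1 else -1
  let b : V → ℝ := fun v => if v ∈ Vm then -1 else 1
  have ha : a ≤ G.localValue a := fun v => by
    by_cases hv : v ∈ Vp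
    · by_cases h0 : G.player v = 0
      · obtain ⟨u, hu, hup⟩ := hWp v hv h0
        rw [G.localValue_of_player_eq_zero h0]
        exact Finset.le_sup'_of_le a hu (by simp [a, hv, hup])
      · have hall : ∀ u ∈ G.succ v, a u = 1 := fun u hu => if_pos (hBp v hv (by omega) u hu)
        simp [G.localValue_congr hall, G.localValue_const, a, hv]
    · calc a v = G.localValue (fun _ => -1) v := by simp [G.localValue_const, a, hv]
        _ ≤ G.localValue a v :=
          G.localValue_mono (fun u => by dsimp [a]; split_ifs <;> norm_num) v
  have hb : G.localValue b ≤ b := fun v => by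
    by_cases hv : v ∈ Vm
    · by_cases h1 : G.player v = 1
      · obtain ⟨u, hu, hum⟩ := hBm v hv h1
        rw [G.localValue_of_player_eq_one h1]
        exact Finset.inf'_le_of_le b hu (by simp [b, hv, hum])
      · have hall : ∀ u ∈ G.succ v, b u = -1 := fun u hu => if_pos (hWm v hv (by omega) u hu)
        simp [G.localValue_congr hall, G.localValue_const, b, hv]
    · calc G.localValue b v ≤ G.localValue (fun _ => 1) v :=
            G.localValue_mono (fun u => by dsimp [b]; split_ifs <;> norm_num) v
        _ = b v := by simp [G.localValue_const, b, hv]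
  have hab : a ≤ b := fun v => by
    dsimp [a, b]
    split_ifs with hp hm
    · exact absurd hm (Set.disjoint_left.1 hdisj hp)
    all_goals norm_num
  obtain ⟨g, ⟨hag, hgb⟩, hg⟩ := G.localValue_mono.exists_mem_Icc_isFixedPt hab ha hb
  refine ⟨g, hg, fun v hv => le_antisymm ?_ ?_, fun v hv => le_antisymm ?_ ?_⟩
  · simpa [b, Set.disjoint_left.1 hdisj hv] using hgb v
  · simpa [a, hv] using hag v
  · simpa [b, hv] using hgb v
  · simpa [a, Set.disjoint_right.1 hdisj hv] using hag v

variable {G} {g : V → ℝ}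

lemma mulVec_P_le_of_localValue_eq (hg : G.localValue g = g) (hs : G.Valid s)
    (hB : ∀ v, G.player v = 1 → g (s v) ≤ g v) : G.P s *ᵥ g ≤ g := fun v => by
  by_cases h2 : G.player v = 2
  · rw [G.mulVec_P_of_player_eq_two h2, ← G.localValue_of_player_eq_two h2, hg]
  rw [G.mulVec_P_of_player_ne_two h2]
  by_cases h0 : G.player v = 0
  · exact (Finset.le_sup' g (hs v)).trans_eq (by rw [← G.localValue_of_player_eq_zero h0, hg])
  · exact hB v (by omega)

lemma le_mulVec_P_of_localValue_eq (hg : G.localValue g = g) (hs : G.Valid s)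
    (hW : ∀ v, G.player v = 0 → g v ≤ g (s v)) : g ≤ G.P s *ᵥ g := fun v => by
  by_cases h2 : G.player v = 2
  · rw [G.mulVec_P_of_player_eq_two h2, ← G.localValue_of_player_eq_two h2, hg]
  rw [G.mulVec_P_of_player_ne_two h2]
  by_cases h0 : G.player v = 0
  · exact hW v h0
  · exact (Finset.inf'_le g (hs v)).trans_eq'
      (by rw [← G.localValue_of_player_eq_one (by omega), hg])

lemma rbar_eq_of_r_eq (hr : ∀ v u, G.r v u = g v) (s : V → V) : G.rbar s = g := by
  funext v
  by_cases h2 : G.player v = 2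
  · simp [rbar, h2, hr, ← Finset.sum_mul, G.p_sum v h2]
  · simp [rbar, h2, hr]

lemma payoff_le_of_mulVec_P_le (hr : ∀ v u, G.r v u = g v) (h : G.P s *ᵥ g ≤ g) :
    G.payoff s ≤ g := by
  have htend := G.tendsto_cesaro_payoff s
  rw [rbar_eq_of_r_eq hr] at htend
  exact le_of_tendsto' htend (cesaro_le_of_mulVec_le (G.P_mem_rowStochastic s) h)

lemma le_payoff_of_le_mulVec_P (hr : ∀ v u, G.r v u = g v) (h : g ≤ G.P s *ᵥ g) :
    g ≤ G.payoff s := by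
  have htend := G.tendsto_cesaro_payoff s
  rw [rbar_eq_of_r_eq hr] at htend
  exact ge_of_tendsto' htend (le_cesaro_of_le_mulVec (G.P_mem_rowStochastic s) h)

theorem isValue_of_localValue_eq (hg : G.localValue g = g) (hr : ∀ v u, G.r v u = g v) :
    G.IsValue g := by
  choose sW hsW using fun v => Finset.exists_mem_eq_sup' (G.succ_nonempty v) g
  choose sB hsB using fun v => Finset.exists_mem_eq_inf' (G.succ_nonempty v) g
  have hW : ∀ sB' v, G.player v = 0 → g v ≤ g (G.combine sW sB' v) := fun _ v hv => by
    simp [combine, hv, ← (hsW v).2, ← G.localValue_of_player_eq_zero hv, hg]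
  have hB : ∀ sW' v, G.player v = 1 → g (G.combine sW' sB v) ≤ g v := fun _ v hv => by
    simp [combine, hv, ← (hsB v).2, ← G.localValue_of_player_eq_one hv, hg]
  have hs : G.Valid (G.combine sW sB) := fun v => by
    unfold combine
    split_ifs
    exacts [(hsW v).1, (hsB v).1]
  refine ⟨sW, sB, hs, fun v => congrFun ?_ v,
    fun sW' hs' => payoff_le_of_mulVec_P_le hr (mulVec_P_le_of_localValue_eq hg hs' (hB sW')),
    fun sB' hs' => le_payoff_of_le_mulVec_P hr (le_mulVec_P_of_localValue_eq hg hs' (hW sB'))⟩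
  exact le_antisymm (le_payoff_of_le_mulVec_P hr (le_mulVec_P_of_localValue_eq hg hs (hW sB)))
    (payoff_le_of_mulVec_P_le hr (mulVec_P_le_of_localValue_eq hg hs (hB sW)))

noncomputable def uniform (succ : V → Finset V) (hne : ∀ v, (succ v).Nonempty)
    (player : V → Fin 3) (r : V → V → ℝ) : BWR V where
  succ := succ
  succ_nonempty := hne
  player := player
  p v u := if u ∈ succ v then ((succ v).card : ℝ)⁻¹ else 0
  p_mem v u _ := by
    by_cases hu : u ∈ succ v
    · simpa [hu] using (hne v).card_pos
    · simp [hu]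
  p_zero v u _ hu := if_neg hu
  p_sum v _ := by
    rw [Finset.sum_congr rfl fun u hu => if_pos hu, Finset.sum_const, nsmul_eq_mul,
      mul_inv_cancel₀ (by simpa using (hne v).ne_empty)]
  r := r

end BWR

/-- A digraph (with no sinks) is ergodic — i.e. every BWR-game on it
has a position-independent value — if and only if it admits no contra-ergodic
partition. -/
theorem digraph_ergodic_iff_no_contra_ergodic_partition
    {V : Type} [Fintype V] [DecidableEq V]
    (succ : V → Finset V) (hne : ∀ v, (succ v).Nonempty) (player : V → Fin 3) :
    (∀ G : BWR V, G.succ = succ → G.player = player →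
        ∀ μ : V → ℝ, G.IsValue μ → ∀ v u : V, μ v = μ u) ↔
      ¬ ∃ Vp Vm : Set V, ContraErgodicPartition succ player Vp Vm := by
  constructor
  · rintro hergodic ⟨Vp, Vm, hCEP⟩
    obtain ⟨g, hg, hgp, hgm⟩ :=
      (BWR.uniform succ hne player 0).exists_localValue_eq_of_contraErgodicPartition hCEP
    obtain ⟨⟨v, hv⟩, ⟨u, hu⟩, -⟩ := hCEP
    have hvu := hergodic (BWR.uniform succ hne player fun v _ => g v) rfl rfl g
      (BWR.isValue_of_localValue_eq hg fun _ _ => rfl) v u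
    norm_num [hgp v hv, hgm u hu] at hvu
  · rintro hno G rfl rfl μ hμ v u
    by_contra hvu
    exact hno ⟨_, _, hμ.contraErgodicPartition hvu⟩
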